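/- Let T = (π_1, …, π_n) be a tree-like multi-set of permutations of a finite set X. Then for any indices i ≠ j, #Fix(π_i) + #Fix(π_j) ≥ 2, where #Fix(π) denotes the number of fixed points of π on X. -/

import Mathlib

/-- The cycle graph of a multi-set (indexed family) of permutations of `X`: a bipartite
graph whose white vertices are the points of `X` and whose black vertices are the cycles
of length at least 2 of the permutations (counted with multiplicity over the index set),
a white vertex being joined to a cycle exactly when the cycle moves it. -/
def cycleGraph {I X : Type*} [Fintype X] [DecidableEq X] (π : I → Equiv.Perm X) :
    SimpleGraph (X ⊕ {p : I × Equiv.Perm X // p.2 ∈ (π p.1).cycleFactorsFinset}) where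
  Adj a b := ∃ (x : X) (c : {p : I × Equiv.Perm X // p.2 ∈ (π p.1).cycleFactorsFinset}),
    c.1.2 x ≠ x ∧ ((a = Sum.inl x ∧ b = Sum.inr c) ∨ (a = Sum.inr c ∧ b = Sum.inl x))
  symm := by
    constructor
    rintro a b ⟨x, c, hc, (⟨rfl, rfl⟩ | ⟨rfl, rfl⟩)⟩
    · exact ⟨x, c, hc, Or.inr ⟨rfl, rfl⟩⟩
    · exact ⟨x, c, hc, Or.inl ⟨rfl, rfl⟩⟩
  loopless := by
    constructor
    rintro a ⟨x, c, hc, (⟨rfl, h⟩ | ⟨rfl, h⟩)⟩ <;> simp at h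

/-- A multi-set (indexed family) of permutations of `X` is tree-like if its cycle graph
is a tree. -/
def TreeLikeFamily {I X : Type*} [Fintype X] [DecidableEq X] (π : I → Equiv.Perm X) :
    Prop :=
  (cycleGraph π).IsTree

/-- The number of fixed points of a permutation of a finite set. -/
def fixCard {X : Type*} [Fintype X] [DecidableEq X] (σ : Equiv.Perm X) : ℕ :=
  (Finset.univ.filter fun x => σ x = x).card

/-!
Count the cycle graph of a tree-like family: a cycle `c` of `π k` is joined to the `#c.support`
points it moves, so the graph has at least `∑ k, #(π k).support` edges and exactly
`card X + ∑ k, #(π k).cycleFactorsFinset` vertices. Being a tree, it has one vertex more than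
edges, hence `∑ k, (#(π k).support - #(π k).cycleFactorsFinset) < card X`. Since every cycle
moves at least two points, each summand is at least half of `#(π k).support`; keeping only the
summands `i` and `j` gives `#(π i).support + #(π j).support ≤ 2 * card X - 2`.
-/

open Finset

namespace Equiv.Perm

variable {X : Type*} [Fintype X] [DecidableEq X]

theorem card_support_add_fixCard (σ : Perm X) : #σ.support + fixCard σ = Fintype.card X := by
  rw [fixCard, add_comm, ← card_univ,
    ← card_filter_add_card_filter_not (s := univ) fun x => σ x = x]
  congr 2

theorem sum_card_support_cycleFactorsFinset (σ : Perm X) :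
    ∑ c ∈ σ.cycleFactorsFinset, #c.support = #σ.support := by
  rw [← sum_cycleType, cycleType_def, sum_eq_multiset_sum]
  rfl

theorem two_mul_card_cycleFactorsFinset_le_card_support (σ : Perm X) :
    2 * #σ.cycleFactorsFinset ≤ #σ.support := by
  rw [← sum_card_support_cycleFactorsFinset, mul_comm, ← smul_eq_mul]
  exact card_nsmul_le_sum _ _ _ fun c hc => (mem_cycleFactorsFinset_iff.mp hc).1.two_le_card_support

end Equiv.Perm

section CycleGraph

variable {I X : Type*} [Fintype I] [Fintype X] [DecidableEq X] (π : I → Equiv.Perm X)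

theorem sum_cycleGraph_black (f : I → Equiv.Perm X → ℕ) :
    ∑ c : {p : I × Equiv.Perm X // p.2 ∈ (π p.1).cycleFactorsFinset}, f c.1.1 c.1.2 =
      ∑ k, ∑ σ ∈ (π k).cycleFactorsFinset, f k σ := by
  rw [← (Equiv.subtypeProdEquivSigmaSubtype
      fun k σ => σ ∈ (π k).cycleFactorsFinset).symm.sum_comp, Fintype.sum_sigma]
  exact Fintype.sum_congr _ _ fun k => sum_coe_sort _ (f k)

theorem card_cycleGraph_black :
    Fintype.card {p : I × Equiv.Perm X // p.2 ∈ (π p.1).cycleFactorsFinset} =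
      ∑ k, #(π k).cycleFactorsFinset := by
  simpa using sum_cycleGraph_black π fun _ _ => 1

theorem sum_card_support_le_card_edgeFinset [Fintype (cycleGraph π).edgeSet] :
    ∑ k, #(π k).support ≤ #(cycleGraph π).edgeFinset := by
  rw [Fintype.sum_congr _ _ fun k => (π k).sum_card_support_cycleFactorsFinset.symm,
    ← sum_cycleGraph_black π fun _ c => #c.support, ← card_sigma]
  refine card_le_card_of_injOn (fun q => s(Sum.inl q.2, Sum.inr q.1)) ?_ ?_
  · rintro ⟨c, x⟩ hx
    simp only [coe_sigma, Set.mem_sigma_iff, mem_coe, mem_univ, true_and,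
      Equiv.Perm.mem_support] at hx
    simpa using ⟨x, c, hx, Or.inl ⟨rfl, rfl⟩⟩
  · rintro ⟨c, x⟩ - ⟨c', x'⟩ - h
    obtain ⟨rfl, rfl⟩ : x = x' ∧ c = c' := by simpa using h
    rfl

theorem TreeLikeFamily.sum_card_support_sub_card_cycleFactorsFinset_lt
    (hT : TreeLikeFamily π) :
    ∑ k, (#(π k).support - #(π k).cycleFactorsFinset) < Fintype.card X := by
  classical
  have hEuler := hT.card_edgeFinset
  rw [Fintype.card_sum, card_cycleGraph_black] at hEuler
  have hEdges := sum_card_support_le_card_edgeFinset π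
  have hSplit : ∑ k, (#(π k).support - #(π k).cycleFactorsFinset) +
      ∑ k, #(π k).cycleFactorsFinset = ∑ k, #(π k).support := by
    rw [← sum_add_distrib]
    refine sum_congr rfl fun k _ => Nat.sub_add_cancel ?_
    have := (π k).two_mul_card_cycleFactorsFinset_le_card_support
    omega
  omega

end CycleGraph

/-- For a tree-like multi-set `(π_1, …, π_n)` of permutations of a finite set `X` and any
two distinct indices `i ≠ j`, the permutations `π_i` and `π_j` have at least two fixed
points between them. -/
theorem treeLike_two_fixed_points {n : ℕ} {X : Type*} [Fintype X] [DecidableEq X]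
    (π : Fin n → Equiv.Perm X) (hT : TreeLikeFamily π)
    {i j : Fin n} (hij : i ≠ j) :
    2 ≤ fixCard (π i) + fixCard (π j) := by
  have hTree := hT.sum_card_support_sub_card_cycleFactorsFinset_lt
  have hPair : #(π i).support - #(π i).cycleFactorsFinset +
      (#(π j).support - #(π j).cycleFactorsFinset) ≤
      ∑ k, (#(π k).support - #(π k).cycleFactorsFinset) :=
    add_le_sum (f := fun k => #(π k).support - #(π k).cycleFactorsFinset)
      (fun k _ => Nat.zero_le _) (mem_univ i) (mem_univ j) hij
  have hCycles_i := (π i).two_mul_card_cycleFactorsFinset_le_card_support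
  have hCycles_j := (π j).two_mul_card_cycleFactorsFinset_le_card_support
  have hFix_i := (π i).card_support_add_fixCard
  have hFix_j := (π j).card_support_add_fixCard
  omega
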